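/- Let k ≥ 2 and let (x_n)_{n≥1} ⊆ [0,1] have Poissonian k-th order correlations. Then for every s > 0, the k-th factorial moment I_k(s,N) = ∫_0^1 F(t,s,N)·(F(t,s,N)−1)···(F(t,s,N)−(k−1)) dt satisfies lim_{N→∞} I_k(s,N) = s^k. -/

import Mathlib

/-!
Expanding the falling factorial, `F(F-1)⋯(F-k+1)` counts the ordered `k`-tuples of distinct
indices `i` whose points all lie within `s/(2N)` of `t`, so `I_k(s,N)` is a sum over such tuples
of the measure of the set of admissible `t`. Shifting `t` by the first point `x_{i_0}` and
rescaling by `N`, that measure is `1/N` times the measure of the `w ∈ [-s/2, s/2]` for which every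
`N·((x_{i_0} - x_{i_r}))` lies in `[-s/2 - w, s/2 - w]` (once `s/(2N) < 1/4`, distances modulo 1
are honest absolute values). Hence `I_k(s,N)` is the integral over `w ∈ [-s/2, s/2]` of the
normalised count of tuples in the box `[-s/2 - w, s/2 - w]^{k-1}`. By Poissonian correlations this
count tends to `s^{k-1}` for each `w`, and it is dominated by the count for the box
`[-s, s]^{k-1}`, which converges and is therefore bounded; dominated convergence gives `s^k`.
-/

open Finset Filter MeasureTheory
open scoped Classical ENNReal NNReal

/-- Distance from `x` to the nearest integer. -/
noncomputable def nint (x : ℝ) : ℝ := |x - round x|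

/-- Signed distance from `x` to the origin modulo 1. -/
noncomputable def sdist (x : ℝ) : ℝ :=
  if Int.fract x ≤ 1 / 2 then Int.fract x else Int.fract x - 1

/-- Number of `k`-tuples of pairwise distinct indices in `{1,…,N}` whose rescaled signed
differences lie in the box `∏ r, [a r, b r]`. -/
noncomputable def corrBoxCount (x : ℕ → ℝ) (k N : ℕ) (a b : Fin (k - 1) → ℝ) : ℕ :=
  ((Fintype.piFinset fun _ : Fin k => Finset.Icc 1 N).filter fun i =>
    Function.Injective i ∧ ∀ r : Fin (k - 1),
      (N : ℝ) * sdist (x (i ⟨0, by have := r.2; omega⟩) - x (i ⟨r.1 + 1, by have := r.2; omega⟩))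
        ∈ Set.Icc (a r) (b r)).card

/-- The sequence `x` (indexed by `n ≥ 1`) has Poissonian correlations of order `k`. -/
def HasPoissonianCorr (x : ℕ → ℝ) (k : ℕ) : Prop :=
  ∀ a b : Fin (k - 1) → ℝ, (∀ r, a r ≤ b r) →
    Tendsto (fun N : ℕ => (corrBoxCount x k N a b : ℝ) / N) atTop
      (nhds (∏ r, (b r - a r)))

/-- The `k`-th order correlation function `R_k(s₁,…,s_{k-1},N)` (pairwise distinct indices). -/
noncomputable def Rcorr (x : ℕ → ℝ) (k N : ℕ) (s : Fin (k - 1) → ℝ) : ℝ :=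
  (((Fintype.piFinset fun _ : Fin k => Finset.Icc 1 N).filter fun i =>
    Function.Injective i ∧ ∀ r : Fin (k - 1),
      nint (x (i ⟨0, by have := r.2; omega⟩) - x (i ⟨r.1 + 1, by have := r.2; omega⟩))
        ≤ s r / N).card : ℝ) / N

/-- The `k`-th order correlation function `R_k^*(s₁,…,s_{k-1},N)` (indices not necessarily
distinct). -/
noncomputable def RcorrStar (x : ℕ → ℝ) (k N : ℕ) (s : Fin (k - 1) → ℝ) : ℝ :=
  (((Fintype.piFinset fun _ : Fin k => Finset.Icc 1 N).filter fun i =>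
    ∀ r : Fin (k - 1),
      nint (x (i ⟨0, by have := r.2; omega⟩) - x (i ⟨r.1 + 1, by have := r.2; omega⟩))
        ≤ s r / N).card : ℝ) / N

/-- `F(t,s,N)`: the number of `n ≤ N` with `‖x_n − t‖ ≤ s/(2N)`. -/
noncomputable def Fcnt (x : ℕ → ℝ) (s : ℝ) (N : ℕ) (t : ℝ) : ℕ :=
  ((Finset.Icc 1 N).filter fun n => nint (x n - t) ≤ s / (2 * N)).card

lemma nint_add_intCast (x : ℝ) (n : ℤ) : nint (x + n) = nint x := by
  simp only [nint, round_add_intCast, Int.cast_add]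
  ring_nf

lemma nint_neg (x : ℝ) : nint (-x) = nint x := by
  have key (y : ℝ) : nint (-y) ≤ nint y :=
    calc nint (-y) ≤ |-y - ((-round y : ℤ) : ℝ)| := round_le _ _
      _ = nint y := by rw [nint, ← abs_neg]; push_cast; ring_nf
  exact le_antisymm (key x) (by simpa using key (-x))

lemma nint_le_iff_abs_le {y δ : ℝ} (h : |y| + δ < 1) : nint y ≤ δ ↔ |y| ≤ δ := by
  refine ⟨fun hy => ?_, fun hy => (by simpa [nint] using round_le y 0 : nint y ≤ |y|).trans hy⟩
  rcases eq_or_ne (round y) 0 with h0 | h0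
  · simpa [nint, h0] using hy
  · have h1 : (1 : ℝ) ≤ |(round y : ℝ)| := by exact_mod_cast Int.one_le_abs h0
    have h2 := abs_sub_abs_le_abs_sub (round y : ℝ) y
    rw [abs_sub_comm] at h2
    unfold nint at hy
    linarith

@[fun_prop]
lemma measurable_nint : Measurable nint := by
  have : nint = fun x : ℝ => |x - (⌊x + 1 / 2⌋ : ℝ)| := funext fun x => by rw [nint, round_eq]
  rw [this]
  fun_prop

lemma abs_sdist_le (x : ℝ) : |sdist x| ≤ 1 / 2 := by
  have := Int.fract_nonneg x
  have := Int.fract_lt_one x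
  unfold sdist
  split_ifs <;> rw [abs_le] <;> constructor <;> linarith

lemma nint_sdist_add (z u : ℝ) : nint (sdist z + u) = nint (z + u) := by
  unfold sdist
  split_ifs
  · rw [← nint_add_intCast _ ⌊z⌋, Int.fract]; ring_nf
  · rw [← nint_add_intCast _ (⌊z⌋ + 1), Int.fract]; push_cast; ring_nf

lemma forall_nint_sub_le_iff {m : ℕ} (y : Fin (m + 1) → ℝ) {δ u : ℝ} (hδ : δ < 1 / 4)
    (hu : |u| ≤ 1 / 2) :
    (∀ r, nint (y r - (u + y 0)) ≤ δ) ↔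
      |u| ≤ δ ∧ ∀ r : Fin m, |sdist (y 0 - y r.succ) + u| ≤ δ := by
  have h0 : nint (y 0 - (u + y 0)) = nint u := by rw [← nint_neg]; ring_nf
  have hsucc (r : Fin m) :
      nint (y r.succ - (u + y 0)) = nint (sdist (y 0 - y r.succ) + u) := by
    rw [nint_sdist_add, ← nint_neg]; ring_nf
  rw [Fin.forall_fin_succ, h0, nint_le_iff_abs_le (by linarith)]
  refine and_congr_right fun huδ => forall_congr' fun r => ?_
  rw [hsucc, nint_le_iff_abs_le]
  linarith [abs_add_le (sdist (y 0 - y r.succ)) u, abs_sdist_le (y 0 - y r.succ)]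

lemma intervalIntegral.integral_eq_integral_of_support_subset_Icc {f : ℝ → ℝ} {a b : ℝ}
    (hab : a ≤ b) (h : Function.support f ⊆ Set.Icc a b) : ∫ x in a..b, f x = ∫ x, f x := by
  rw [intervalIntegral.integral_of_le hab, ← integral_Icc_eq_integral_Ioc,
    ← MeasureTheory.integral_indicator measurableSet_Icc, Set.indicator_eq_self.2 h]

lemma integral_forall_nint_sub_le {m : ℕ} (y : Fin (m + 1) → ℝ) {δ : ℝ} (hδ₀ : 0 ≤ δ)
    (hδ : δ < 1 / 4) :
    ∫ t in (0 : ℝ)..1, (if ∀ r, nint (y r - t) ≤ δ then (1 : ℝ) else 0) =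
      ∫ u in -δ..δ, if ∀ r : Fin m, |sdist (y 0 - y r.succ) + u| ≤ δ then (1 : ℝ) else 0 := by
  set f : ℝ → ℝ := fun t => if ∀ r, nint (y r - t) ≤ δ then 1 else 0
  set g : ℝ → ℝ := fun u =>
    if |u| ≤ δ ∧ ∀ r : Fin m, |sdist (y 0 - y r.succ) + u| ≤ δ then 1 else 0
  have hf : Function.Periodic f 1 := fun t => by
    simp only [f, show ∀ r, y r - (t + 1) = y r - t + ((-1 : ℤ) : ℝ) by intro r; push_cast; ring,
      nint_add_intCast]
  have hg : Function.support g ⊆ Set.Icc (-δ) δ := fun u hu => by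
    by_contra h
    exact hu (if_neg fun hu' => h (abs_le.1 hu'.1))
  calc ∫ t in (0 : ℝ)..1, f t
      = ∫ u in (-(1 / 2) : ℝ)..1 / 2, f (u + y 0) := by
        rw [intervalIntegral.integral_comp_add_right, ← zero_add (1 : ℝ),
          hf.intervalIntegral_add_eq 0 (-(1 / 2) + y 0)]
        ring_nf
    _ = ∫ u in (-(1 / 2) : ℝ)..1 / 2, g u := by
        refine intervalIntegral.integral_congr fun u hu => ?_
        rw [Set.uIcc_of_le (by norm_num)] at hu
        simp only [f, g, forall_nint_sub_le_iff y hδ (abs_le.2 hu)]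
    _ = ∫ u in -δ..δ, g u := by
        rw [intervalIntegral.integral_eq_integral_of_support_subset_Icc (by norm_num)
            (hg.trans (Set.Icc_subset_Icc (by linarith) (by linarith))),
          intervalIntegral.integral_eq_integral_of_support_subset_Icc (by linarith) hg]
    _ = _ := by
        refine intervalIntegral.integral_congr fun u hu => ?_
        rw [Set.uIcc_of_le (by linarith)] at hu
        simp only [g, abs_le.2 hu, true_and]

lemma integral_forall_nint_sub_le_eq_integral_box {m N : ℕ} (y : Fin (m + 1) → ℝ) {s : ℝ}
    (hs : 0 ≤ s) (hN : 2 * s < N) :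
    ∫ t in (0 : ℝ)..1, (if ∀ r, nint (y r - t) ≤ s / (2 * N) then (1 : ℝ) else 0) =
      (∫ w in -(s / 2)..s / 2,
        if ∀ r : Fin m, N * sdist (y 0 - y r.succ) ∈ Set.Icc (-(s / 2) - w) (s / 2 - w)
        then (1 : ℝ) else 0) / N := by
  have hN₀ : (0 : ℝ) < N := by linarith
  have hbox (w : ℝ) (r : Fin m) :
      |sdist (y 0 - y r.succ) + w / N| ≤ s / (2 * N) ↔
        N * sdist (y 0 - y r.succ) ∈ Set.Icc (-(s / 2) - w) (s / 2 - w) := by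
    rw [← mul_le_mul_iff_of_pos_left hN₀, ← abs_of_pos hN₀, ← abs_mul, abs_of_pos hN₀,
      Set.mem_Icc, abs_le]
    field_simp
    constructor <;> rintro ⟨h₁, h₂⟩ <;> constructor <;> linarith
  simp only [← hbox]
  rw [integral_forall_nint_sub_le y (by positivity)
      (by rw [div_lt_iff₀ (by positivity)]; linarith),
    intervalIntegral.integral_comp_div
      (fun u => if ∀ r : Fin m, |sdist (y 0 - y r.succ) + u| ≤ s / (2 * N) then (1 : ℝ) else 0)
      hN₀.ne', smul_eq_mul, mul_div_cancel_left₀ _ hN₀.ne', neg_div, div_div]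

lemma card_filter_injective_piFinset {α : Type*} [DecidableEq α] (k : ℕ) (S : Finset α) :
    ((Fintype.piFinset fun _ : Fin k => S).filter Function.Injective).card =
      S.card.descFactorial k := by
  calc _ = (univ : Finset (Fin k ↪ S)).card := (card_nbij (fun e r => (e r).1)
        (fun e _ => ?_) (fun e _ e' _ h => ?_) (fun i hi => ?_)).symm
    _ = S.card.descFactorial k := by
      rw [card_univ, Fintype.card_embedding_eq, Fintype.card_coe, Fintype.card_fin]
  · simp only [coe_filter, Fintype.mem_piFinset, Set.mem_ofPred_eq]
    exact ⟨fun r => (e r).2, fun r r' h => e.injective (Subtype.ext h)⟩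
  · exact DFunLike.ext _ _ fun r => Subtype.ext (congrFun h r)
  · simp only [coe_filter, Fintype.mem_piFinset, Set.mem_ofPred_eq] at hi
    exact ⟨⟨fun r => ⟨i r, hi.1 r⟩, fun r r' h => hi.2 (congrArg Subtype.val h)⟩, by simp, rfl⟩

lemma prod_Fcnt_sub_eq_sum (x : ℕ → ℝ) (s : ℝ) (k N : ℕ) (t : ℝ) :
    ∏ j ∈ range k, ((Fcnt x s N t : ℝ) - j) =
      ∑ i ∈ (Fintype.piFinset fun _ : Fin k => Icc 1 N).filter Function.Injective,
        if ∀ r, nint (x (i r) - t) ≤ s / (2 * N) then (1 : ℝ) else 0 := by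
  rw [← descPochhammer_eval_eq_prod_range, descPochhammer_eval_eq_descFactorial, Fcnt,
    ← card_filter_injective_piFinset, sum_boole, filter_filter]
  congr 2
  ext i
  simp only [mem_filter, Fintype.mem_piFinset, forall_and]
  tauto

lemma corrBoxCount_succ_eq_sum (x : ℕ → ℝ) (m N : ℕ) (a b : Fin m → ℝ) :
    (corrBoxCount x (m + 1) N a b : ℝ) =
      ∑ i ∈ (Fintype.piFinset fun _ : Fin (m + 1) => Icc 1 N).filter Function.Injective,
        if ∀ r : Fin m, N * sdist (x (i 0) - x (i r.succ)) ∈ Set.Icc (a r) (b r)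
        then (1 : ℝ) else 0 := by
  rw [sum_boole, filter_filter]
  rfl

lemma intervalIntegrable_ite_one_zero {P : ℝ → Prop} [DecidablePred P]
    (hP : MeasurableSet {t | P t}) (a b : ℝ) :
    IntervalIntegrable (fun t => if P t then (1 : ℝ) else 0) volume a b :=
  (intervalIntegrable_const (c := (1 : ℝ))).mono_fun
    (Measurable.ite hP measurable_const measurable_const).aestronglyMeasurable
    (ae_of_all _ fun t => by dsimp only; split_ifs <;> simp)

theorem integral_prod_Fcnt_sub_eq_integral_corrBoxCount (x : ℕ → ℝ) (m N : ℕ) {s : ℝ}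
    (hs : 0 ≤ s) (hN : 2 * s < N) :
    ∫ t in (0 : ℝ)..1, ∏ j ∈ range (m + 1), ((Fcnt x s N t : ℝ) - j) =
      ∫ w in -(s / 2)..s / 2,
        (corrBoxCount x (m + 1) N (fun _ => -(s / 2) - w) (fun _ => s / 2 - w) : ℝ) / N := by
  simp only [prod_Fcnt_sub_eq_sum, corrBoxCount_succ_eq_sum, sum_div]
  rw [intervalIntegral.integral_finsetSum fun i _ =>
      intervalIntegrable_ite_one_zero (by measurability) _ _,
    intervalIntegral.integral_finsetSum fun i _ =>
      (intervalIntegrable_ite_one_zero (by measurability) _ _).div_const _]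
  refine sum_congr rfl fun i _ => ?_
  rw [integral_forall_nint_sub_le_eq_integral_box (fun r => x (i r)) hs hN,
    intervalIntegral.integral_div]

lemma corrBoxCount_mono (x : ℕ → ℝ) (k N : ℕ) {a b a' b' : Fin (k - 1) → ℝ}
    (ha : ∀ r, a' r ≤ a r) (hb : ∀ r, b r ≤ b' r) :
    corrBoxCount x k N a b ≤ corrBoxCount x k N a' b' :=
  card_le_card <| monotone_filter_right _ fun _ _ ⟨hi, hbox⟩ =>
    ⟨hi, fun r => Set.Icc_subset_Icc (ha r) (hb r) (hbox r)⟩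

theorem tendsto_integral_corrBoxCount {x : ℕ → ℝ} {m : ℕ} (hP : HasPoissonianCorr x (m + 1))
    {s : ℝ} (hs : 0 ≤ s) :
    Tendsto (fun N : ℕ => ∫ w in -(s / 2)..s / 2,
        (corrBoxCount x (m + 1) N (fun _ => -(s / 2) - w) (fun _ => s / 2 - w) : ℝ) / N)
      atTop (nhds (s ^ (m + 1))) := by
  obtain ⟨C, hC⟩ := (hP (fun _ => -s) (fun _ => s) fun _ => by linarith).bddAbove_range
  have hlim (w : ℝ) : Tendsto (fun N : ℕ =>
      (corrBoxCount x (m + 1) N (fun _ => -(s / 2) - w) (fun _ => s / 2 - w) : ℝ) / N)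
      atTop (nhds (s ^ m)) := by
    convert hP (fun _ => -(s / 2) - w) (fun _ => s / 2 - w) fun _ => by linarith
    simp
  have hbound (N : ℕ) (w : ℝ) (hw : w ∈ Set.uIoc (-(s / 2)) (s / 2)) :
      ‖(corrBoxCount x (m + 1) N (fun _ => -(s / 2) - w) (fun _ => s / 2 - w) : ℝ) / N‖ ≤ C := by
    rw [Set.uIoc_of_le (by linarith)] at hw
    refine (Real.norm_of_nonneg (by positivity)).trans_le <| le_trans ?_ (hC ⟨N, rfl⟩)
    refine div_le_div_of_nonneg_right ?_ (Nat.cast_nonneg _)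
    exact_mod_cast corrBoxCount_mono x _ N (fun _ => by linarith [hw.2])
      (fun _ => by linarith [hw.1])
  have hmeas (N : ℕ) : Measurable fun w : ℝ =>
      (corrBoxCount x (m + 1) N (fun _ => -(s / 2) - w) (fun _ => s / 2 - w) : ℝ) / N := by
    simp only [corrBoxCount_succ_eq_sum]
    exact (Finset.measurable_sum _ fun i _ =>
      Measurable.ite (by measurability) measurable_const measurable_const).div_const _
  have h := intervalIntegral.tendsto_integral_filter_of_dominated_convergence (fun _ => C)
    (Eventually.of_forall fun N => (hmeas N).aestronglyMeasurable)
    (Eventually.of_forall fun N => ae_of_all _ (hbound N)) (μ := volume) intervalIntegrable_const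
    (ae_of_all _ fun w _ => hlim w)
  rwa [intervalIntegral.integral_const, smul_eq_mul, sub_neg_eq_add, add_halves, ← pow_succ'] at h

theorem factorial_moment_tendsto_pow_general
    (k : ℕ) (x : ℕ → ℝ)
    (hP : HasPoissonianCorr x k) :
    ∀ s : ℝ, 0 < s →
      Tendsto (fun N : ℕ =>
          ∫ t in (0:ℝ)..1, ∏ j ∈ Finset.range k, ((Fcnt x s N t : ℝ) - (j : ℝ)))
        atTop (nhds (s ^ k)) := by
  intro s hs
  cases k with
  | zero => simp
  | succ m =>
    refine (tendsto_integral_corrBoxCount hP hs.le).congr' ?_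
    filter_upwards [eventually_gt_atTop ⌈2 * s⌉₊] with N hN
    exact (integral_prod_Fcnt_sub_eq_integral_corrBoxCount x m N hs.le
      (Nat.lt_of_ceil_lt hN)).symm

/-- If `(x_n)` has Poissonian `k`-th order correlations, then the `k`-th
factorial moment `I_k(s,N) = ∫₀¹ F(F-1)⋯(F-(k-1)) dt` tends to `s^k`. -/
theorem factorial_moment_tendsto_pow
    (k : ℕ) (hk : 2 ≤ k) (x : ℕ → ℝ) (hx : ∀ n, x n ∈ Set.Icc (0 : ℝ) 1)
    (hP : HasPoissonianCorr x k) :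
    ∀ s : ℝ, 0 < s →
      Tendsto (fun N : ℕ =>
          ∫ t in (0:ℝ)..1, ∏ j ∈ Finset.range k, ((Fcnt x s N t : ℝ) - (j : ℝ)))
        atTop (nhds (s ^ k)) :=
  factorial_moment_tendsto_pow_general k x hP
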